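/- In the setting of the local allocation-stability result (unique interior minimizer τ* of L_τ over [ε,α−ε], neighborhood N = [τ*−δ, τ*+δ] with L''_τ ≥ c > 0 on N, off-neighborhood gap κ > 0, grid mesh Δ, grid approximation error r, b := MΔ + 2r < κ), suppose in addition that μ satisfies Assumption (D), that f_N := inf_{τ∈N} min{f(q_τ), f(q_{1−α+τ})} > 0, and that estimated quantiles q̂_γ satisfy |q̂_γ − q_γ| ≤ ε^q for all γ ∈ G ∪ (1−α+G). Let τ̂ be an empirical grid minimizer of L̂ over G, and define the empirical core B̂ := [q̂_{τ̂}, q̂_{1−α+τ̂}]. Then the Hausdorff distance between B̂ and the oracle core B_{τ*} satisfies d_H(B̂, B_{τ*}) ≤ ε^q + f_N^{−1} √(2b/c). -/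

import Mathlib

open MeasureTheory Set Filter

noncomputable section

/-- Topological support of a Borel measure on ℝ. -/
def msupp (μ : Measure ℝ) : Set ℝ := {y | ∀ U ∈ nhds y, 0 < μ U}

/-- CDF of `μ`. -/
def cdfR (μ : Measure ℝ) (y : ℝ) : ℝ := (μ (Iic y)).toReal

/-- The `τ`-th quantile of `μ` (for `τ ∈ (0,1)`). -/
def quant (μ : Measure ℝ) (τ : ℝ) : ℝ := sInf {y : ℝ | τ ≤ cdfR μ y}

/-- Extended-real quantile: at `τ ≤ 0` the infimum of the support, at `τ ≥ 1` the
supremum of the support (possibly `±∞`), and otherwise the usual quantile. -/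
def qE (μ : Measure ℝ) (τ : ℝ) : EReal :=
  if τ ≤ 0 then sInf (Real.toEReal '' msupp μ)
  else if 1 ≤ τ then sSup (Real.toEReal '' msupp μ)
  else ((quant μ τ : ℝ) : EReal)

/-- Extended-real length of the quantile core `B_τ = [q_τ, q_{1-α+τ}]`. -/
def coreLen (μ : Measure ℝ) (α τ : ℝ) : EReal := qE μ (1 - α + τ) - qE μ τ

/-- The oracle allocation set `T* = argmin_{τ ∈ [0,α]} L_τ`. -/
def Tstar (μ : Measure ℝ) (α : ℝ) : Set ℝ :=
  {τ | τ ∈ Icc 0 α ∧ ∀ σ ∈ Icc 0 α, coreLen μ α τ ≤ coreLen μ α σ}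

/-- Membership of the interval `[a,b]` in the class `I_{1-α}`. -/
def InClass (μ : Measure ℝ) (α a b : ℝ) : Prop :=
  a ≤ b ∧ 1 - α ≤ (μ (Icc a b)).toReal

/-- `[a,b]` is a shortest interval in the class `I_{1-α}`. -/
def IsShortest (μ : Measure ℝ) (α a b : ℝ) : Prop :=
  InClass μ α a b ∧ ∀ c d : ℝ, InClass μ α c d → b - a ≤ d - c

/-- Assumption (D): the support of `μ` is an interval and `μ` has a density `f`
that is strictly positive and continuously differentiable on the support. -/
structure AssumpD (μ : Measure ℝ) (f : ℝ → ℝ) : Prop where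
  meas : Measurable f
  density : μ = MeasureTheory.volume.withDensity (fun y => ENNReal.ofReal (f y))
  interval : (msupp μ).OrdConnected
  pos : ∀ y ∈ msupp μ, 0 < f y
  smooth : ContDiffOn ℝ 1 f (msupp μ)

/-- Strict unimodality of the density `f` with mode `y0`: `y0` lies in the support,
`f` is strictly increasing before the mode and strictly decreasing after it. -/
def StrictUnimodalAt (μ : Measure ℝ) (f : ℝ → ℝ) (y0 : ℝ) : Prop :=
  y0 ∈ msupp μ ∧ StrictMonoOn f (msupp μ ∩ Iic y0) ∧ StrictAntiOn f (msupp μ ∩ Ici y0)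


section Aux

variable {μ : Measure ℝ} [IsProbabilityMeasure μ] {f : ℝ → ℝ}

lemma cdfR_eq (y : ℝ) : cdfR μ y = ProbabilityTheory.cdf μ y :=
  by rw [ProbabilityTheory.cdf_eq_real]; rfl

lemma cdfR_mono : Monotone (cdfR μ) := by
  intro a b hab
  rw [cdfR_eq, cdfR_eq]
  exact ProbabilityTheory.monotone_cdf μ hab

lemma nonempty_S {τ : ℝ} (hτ : τ < 1) : {y : ℝ | τ ≤ cdfR μ y}.Nonempty := by
  have h : ∀ᶠ y in atTop, τ < ProbabilityTheory.cdf μ y :=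
    (ProbabilityTheory.tendsto_cdf_atTop μ).eventually_const_lt hτ
  obtain ⟨y, hy⟩ := h.exists
  exact ⟨y, by simp [cdfR_eq]; linarith⟩

lemma bddBelow_S {τ : ℝ} (hτ : 0 < τ) : BddBelow {y : ℝ | τ ≤ cdfR μ y} := by
  have h : ∀ᶠ y in atBot, ProbabilityTheory.cdf μ y < τ :=
    (ProbabilityTheory.tendsto_cdf_atBot μ).eventually_lt_const hτ
  obtain ⟨y0, hy0⟩ := (eventually_atBot.mp h)
  refine ⟨y0, fun y hy => ?_⟩
  by_contra hlt
  push_neg at hlt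
  exact absurd hy (by simp only [mem_setOf_eq, cdfR_eq]; exact (hy0 y hlt.le).not_ge)

lemma quant_le_of_mem {τ y : ℝ} (hτ : 0 < τ) (hy : τ ≤ cdfR μ y) : quant μ τ ≤ y :=
  csInf_le (bddBelow_S hτ) hy

lemma cdfR_lt_of_lt_quant {τ y : ℝ} (hτ : 0 < τ) (hy : y < quant μ τ) : cdfR μ y < τ := by
  by_contra h
  push_neg at h
  exact absurd (quant_le_of_mem hτ h) (not_le.mpr hy)

lemma quant_mono {σ τ : ℝ} (hσ : 0 < σ) (hτ : τ < 1) (h : σ ≤ τ) : quant μ σ ≤ quant μ τ :=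
  csInf_le_csInf (bddBelow_S hσ) (nonempty_S hτ) (fun y hy => le_trans h hy)

lemma le_cdfR_quant {τ : ℝ} (hτ0 : 0 < τ) (hτ1 : τ < 1) : τ ≤ cdfR μ (quant μ τ) := by
  set q := quant μ τ with hq
  have hright : Tendsto (cdfR μ) (nhdsWithin q (Ioi q)) (nhds (cdfR μ q)) := by
    have := (ProbabilityTheory.cdf μ).right_continuous q
    have h2 : Tendsto (ProbabilityTheory.cdf μ) (nhdsWithin q (Ioi q))
        (nhds (ProbabilityTheory.cdf μ q)) :=
      this.tendsto.mono_left (nhdsWithin_mono q Ioi_subset_Ici_self)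
    have he : cdfR μ = fun y => ProbabilityTheory.cdf μ y := funext cdfR_eq
    rw [he]
    simpa only [← cdfR_eq q] using h2
  have hev : ∀ y ∈ Ioi q, τ ≤ cdfR μ y := by
    intro y hy
    obtain ⟨s, hs, hsy⟩ := exists_lt_of_csInf_lt (nonempty_S hτ1) (show sInf _ < y from hy)
    exact le_trans hs (cdfR_mono hsy.le)
  exact ge_of_tendsto hright (eventually_nhdsWithin_of_forall hev)

lemma cdfR_quant_le {τ : ℝ} (hatom : ∀ x : ℝ, μ {x} = 0) (hτ0 : 0 < τ) (hτ1 : τ < 1) :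
    cdfR μ (quant μ τ) ≤ τ := by
  set q := quant μ τ with hq
  set F := ProbabilityTheory.cdf μ with hF
  have hsing : F.measure {q} = ENNReal.ofReal (F q - Function.leftLim F q) := F.measure_singleton q
  rw [ProbabilityTheory.measure_cdf, hatom q] at hsing
  have h1 : F q - Function.leftLim F q ≤ 0 := by
    by_contra h
    push_neg at h
    have h2 := ENNReal.ofReal_eq_zero.mp hsing.symm
    linarith
  have h2 : Function.leftLim F q ≤ τ := by
    have htd : Tendsto F (nhdsWithin q (Iio q)) (nhds (Function.leftLim F q)) :=
      F.mono.tendsto_leftLim q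
    refine le_of_tendsto htd (eventually_nhdsWithin_of_forall ?_)
    intro y hy
    have := cdfR_lt_of_lt_quant (μ := μ) hτ0 hy
    rw [cdfR_eq] at this
    exact this.le
  have : cdfR μ q = F q := cdfR_eq q
  linarith

lemma cdfR_quant_eq {τ : ℝ} (hatom : ∀ x : ℝ, μ {x} = 0) (hτ0 : 0 < τ) (hτ1 : τ < 1) :
    cdfR μ (quant μ τ) = τ :=
  le_antisymm (cdfR_quant_le hatom hτ0 hτ1) (le_cdfR_quant hτ0 hτ1)

lemma quant_mem_msupp {τ : ℝ} (hτ0 : 0 < τ) (hτ1 : τ < 1) : quant μ τ ∈ msupp μ := by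
  intro U hU
  set q := quant μ τ with hq
  obtain ⟨η, hη, hball⟩ := Metric.mem_nhds_iff.mp hU
  have hsub : Ioc (q - η) q ⊆ U := by
    intro x hx
    apply hball
    simp only [Metric.mem_ball, Real.dist_eq, abs_lt]
    constructor <;> [linarith [hx.1]; linarith [hx.2, hη]]
  refine lt_of_lt_of_le ?_ (measure_mono hsub)
  by_contra h
  push_neg at h
  have h0 : μ (Ioc (q - η) q) = 0 := le_antisymm h (by simp)
  have hunion : Iic q = Iic (q - η) ∪ Ioc (q - η) q := by
    rw [Iic_union_Ioc_eq_Iic]; linarith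
  have hle : μ (Iic q) ≤ μ (Iic (q - η)) := by
    rw [hunion]
    refine le_trans (measure_union_le _ _) ?_
    rw [h0, add_zero]
  have h1 : cdfR μ q ≤ cdfR μ (q - η) :=
    ENNReal.toReal_mono (measure_ne_top μ _) hle
  have h2 : cdfR μ (q - η) < τ := cdfR_lt_of_lt_quant hτ0 (by linarith)
  have h3 := le_cdfR_quant (μ := μ) hτ0 hτ1
  linarith

lemma atomless_of_D (hD : AssumpD μ f) : ∀ x : ℝ, μ {x} = 0 := by
  intro x
  rw [hD.density]
  exact (withDensity_absolutelyContinuous _ _) (measure_singleton x)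

lemma quant_lipschitz (hD : AssumpD μ f) {σ τ fN : ℝ} (hσ0 : 0 < σ) (hτ1 : τ < 1)
    (hστ : σ ≤ τ) (hfN : 0 < fN) (hf : ∀ t ∈ Icc σ τ, fN ≤ f (quant μ t)) :
    quant μ τ - quant μ σ ≤ fN⁻¹ * (τ - σ) := by
  have hatom := atomless_of_D hD
  set a := quant μ σ with ha
  set b := quant μ τ with hb
  have hσ1 : σ < 1 := lt_of_le_of_lt hστ hτ1
  have hτ0 : 0 < τ := lt_of_lt_of_le hσ0 hστ
  have hab : a ≤ b := quant_mono hσ0 hτ1 hστ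
  have hFa : cdfR μ a = σ := cdfR_quant_eq hatom hσ0 hσ1
  have hFb : cdfR μ b = τ := cdfR_quant_eq hatom hτ0 hτ1
  have hkey : ∀ y ∈ Ioo a b, fN ≤ f y := by
    intro y hy
    set t := cdfR μ y with ht
    have ht1 : σ ≤ t := hFa ▸ cdfR_mono hy.1.le
    have ht2 : t ≤ τ := hFb ▸ cdfR_mono hy.2.le
    have ht0 : 0 < t := lt_of_lt_of_le hσ0 ht1
    have ht1' : t < 1 := lt_of_le_of_lt ht2 hτ1
    have hqt : quant μ t = y := by
      refine le_antisymm (quant_le_of_mem ht0 le_rfl) ?_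
      by_contra hlt
      push_neg at hlt
      set z := quant μ t with hz
      have hza : a ≤ z := quant_mono hσ0 ht1' ht1
      have hFz : cdfR μ z = t := cdfR_quant_eq hatom ht0 ht1'
      have hμeq : μ (Iic z) = μ (Iic y) := by
        have h1 : (μ (Iic z)).toReal = (μ (Iic y)).toReal := by
          show cdfR μ z = cdfR μ y
          rw [hFz, ht]
        exact (ENNReal.toReal_eq_toReal_iff' (measure_ne_top μ _) (measure_ne_top μ _)).mp h1
      have hdisj : Disjoint (Iic z) (Ioc z y) := Iic_disjoint_Ioc le_rfl
      have hun : Iic z ∪ Ioc z y = Iic y := Iic_union_Ioc_eq_Iic hlt.le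
      have hadd : μ (Iic z) + μ (Ioc z y) = μ (Iic y) := by
        rw [← measure_union hdisj measurableSet_Ioc, hun]
      have h0 : μ (Ioc z y) = 0 := by
        rw [← hμeq] at hadd
        have : μ (Iic z) + μ (Ioc z y) = μ (Iic z) + 0 := by rw [add_zero]; exact hadd
        exact (ENNReal.add_right_inj (measure_ne_top μ _)).mp this
      set w := (z + y) / 2 with hw
      have hwz : z < w := by simp [hw]; linarith
      have hwy : w < y := by simp [hw]; linarith
      have hwsupp : w ∈ msupp μ := by
        have h1 : quant μ σ ∈ msupp μ := quant_mem_msupp hσ0 hσ1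
        have h2 : quant μ τ ∈ msupp μ := quant_mem_msupp hτ0 hτ1
        exact hD.interval.out h1 h2 ⟨by linarith [hy.1], by linarith [hy.2]⟩
      have := hwsupp (Ioo z y) (Ioo_mem_nhds hwz hwy)
      have hle : μ (Ioo z y) ≤ μ (Ioc z y) := measure_mono Ioo_subset_Ioc_self
      rw [h0] at hle
      exact absurd hle (by simpa using this.ne')
    rw [← hqt]
    exact hf t ⟨ht1, ht2⟩
  have hμIoc : μ (Ioc a b) = ENNReal.ofReal (τ - σ) := by
    have hadd : μ (Iic a) + μ (Ioc a b) = μ (Iic b) := by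
      rw [← measure_union (Iic_disjoint_Ioc le_rfl) measurableSet_Ioc, Iic_union_Ioc_eq_Iic hab]
    have h1 : (μ (Ioc a b)).toReal = τ - σ := by
      have h2 := congrArg ENNReal.toReal hadd
      rw [ENNReal.toReal_add (measure_ne_top μ _) (measure_ne_top μ _)] at h2
      have h3 : cdfR μ a + (μ (Ioc a b)).toReal = cdfR μ b := h2
      rw [hFa, hFb] at h3
      linarith
    rw [← h1, ENNReal.ofReal_toReal (measure_ne_top μ _)]
  have hlow : ENNReal.ofReal (fN * (b - a)) ≤ μ (Ioc a b) := by
    rw [hD.density, withDensity_apply _ measurableSet_Ioc]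
    calc ENNReal.ofReal (fN * (b - a))
        = ENNReal.ofReal fN * volume (Ioo a b) := by
          rw [Real.volume_Ioo, ← ENNReal.ofReal_mul hfN.le]
      _ = ∫⁻ _ in Ioo a b, ENNReal.ofReal fN := by rw [setLIntegral_const, mul_comm]
      _ ≤ ∫⁻ y in Ioo a b, ENNReal.ofReal (f y) := by
          refine setLIntegral_mono (hD.meas.ennreal_ofReal) ?_
          intro y hy
          exact ENNReal.ofReal_le_ofReal (hkey y hy)
      _ ≤ ∫⁻ y in Ioc a b, ENNReal.ofReal (f y) :=
          lintegral_mono_set Ioo_subset_Ioc_self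
  rw [hμIoc] at hlow
  have hfin : fN * (b - a) ≤ τ - σ := (ENNReal.ofReal_le_ofReal_iff (by linarith)).mp hlow
  rw [inv_mul_eq_div, le_div_iff₀ hfN]
  linarith

lemma taylor_lb {L Lp Lpp : ℝ → ℝ} {t0 δ c : ℝ} (hδ : 0 < δ) (hc : 0 < c)
    (hd1 : ∀ τ ∈ Icc (t0-δ) (t0+δ), HasDerivWithinAt L (Lp τ) (Icc (t0-δ) (t0+δ)) τ)
    (hd2 : ∀ τ ∈ Icc (t0-δ) (t0+δ), HasDerivWithinAt Lp (Lpp τ) (Icc (t0-δ) (t0+δ)) τ)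
    (hcc : ∀ τ ∈ Icc (t0-δ) (t0+δ), c ≤ Lpp τ)
    (hmin0 : Lp t0 = 0)
    {x : ℝ} (hx : x ∈ Icc (t0-δ) (t0+δ)) :
    L t0 + c/2 * (x - t0)^2 ≤ L x := by
  set N := Icc (t0-δ) (t0+δ) with hNdef
  have ht0N : t0 ∈ N := ⟨by linarith, by linarith⟩
  have hNnhds : ∀ τ ∈ Ioo (t0-δ) (t0+δ), N ∈ nhds τ := fun τ hτ => Icc_mem_nhds hτ.1 hτ.2
  set ψ : ℝ → ℝ := fun τ => Lp τ - c * (τ - t0) with hψdef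
  have hψmono : MonotoneOn ψ N := by
    apply monotoneOn_of_deriv_nonneg (convex_Icc _ _)
    · exact fun τ hτ => ((hd2 τ hτ).continuousWithinAt.sub
        (Continuous.continuousWithinAt (by continuity)))
    · intro τ hτ
      rw [interior_Icc] at hτ
      have hderiv : HasDerivAt ψ (Lpp τ - c) τ := by
        have h1 : HasDerivAt Lp (Lpp τ) τ :=
          (hd2 τ (Ioo_subset_Icc_self hτ)).hasDerivAt (hNnhds τ hτ)
        exact (h1.sub (((hasDerivAt_id τ).sub_const t0).const_mul c)).congr_deriv (by ring)
      exact hderiv.differentiableAt.differentiableWithinAt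
    · intro τ hτ
      rw [interior_Icc] at hτ
      have hderiv : HasDerivAt ψ (Lpp τ - c) τ := by
        have h1 : HasDerivAt Lp (Lpp τ) τ :=
          (hd2 τ (Ioo_subset_Icc_self hτ)).hasDerivAt (hNnhds τ hτ)
        exact (h1.sub (((hasDerivAt_id τ).sub_const t0).const_mul c)).congr_deriv (by ring)
      rw [hderiv.deriv]
      have := hcc τ (Ioo_subset_Icc_self hτ)
      linarith
  have hψ0 : ψ t0 = 0 := by simp [hψdef, hmin0]
  set φ : ℝ → ℝ := fun τ => L τ - c/2 * (τ - t0)^2 with hφdef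
  have hφderiv : ∀ τ ∈ Ioo (t0-δ) (t0+δ), HasDerivAt φ (ψ τ) τ := by
    intro τ hτ
    have h1 : HasDerivAt L (Lp τ) τ :=
      (hd1 τ (Ioo_subset_Icc_self hτ)).hasDerivAt (hNnhds τ hτ)
    have h2 : HasDerivAt (fun τ => c/2 * (τ - t0)^2) (c/2 * (2 * (τ - t0))) τ := by
      exact (((hasDerivAt_id τ).sub_const t0).pow 2).const_mul (c/2) |>.congr_deriv
        (by simp only [id]; ring_nf)
    have := h1.sub h2
    exact this.congr_deriv (by simp only [hψdef]; ring)
  have hφcont : ContinuousOn φ N := by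
    intro τ hτ
    exact ((hd1 τ hτ).continuousWithinAt.sub
      (Continuous.continuousWithinAt (by continuity)))
  have hmain : φ t0 ≤ φ x := by
    rcases le_total t0 x with hcase | hcase
    · have hmono : MonotoneOn φ (Icc t0 x) := by
        apply monotoneOn_of_deriv_nonneg (convex_Icc _ _)
        · exact hφcont.mono (Icc_subset_Icc (by linarith) hx.2)
        · intro τ hτ
          rw [interior_Icc] at hτ
          have hτoo : τ ∈ Ioo (t0-δ) (t0+δ) := ⟨by linarith [hτ.1], lt_of_lt_of_le hτ.2 hx.2⟩
          exact (hφderiv τ hτoo).differentiableAt.differentiableWithinAt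
        · intro τ hτ
          rw [interior_Icc] at hτ
          have hτoo : τ ∈ Ioo (t0-δ) (t0+δ) := ⟨by linarith [hτ.1], lt_of_lt_of_le hτ.2 hx.2⟩
          rw [(hφderiv τ hτoo).deriv, ← hψ0]
          exact hψmono ht0N (Ioo_subset_Icc_self hτoo) hτ.1.le
      exact hmono ⟨le_rfl, hcase⟩ ⟨hcase, le_rfl⟩ hcase
    · have hanti : AntitoneOn φ (Icc x t0) := by
        apply antitoneOn_of_deriv_nonpos (convex_Icc _ _)
        · exact hφcont.mono (Icc_subset_Icc hx.1 (by linarith))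
        · intro τ hτ
          rw [interior_Icc] at hτ
          have hτoo : τ ∈ Ioo (t0-δ) (t0+δ) := ⟨lt_of_le_of_lt hx.1 hτ.1, by linarith [hτ.2]⟩
          exact (hφderiv τ hτoo).differentiableAt.differentiableWithinAt
        · intro τ hτ
          rw [interior_Icc] at hτ
          have hτoo : τ ∈ Ioo (t0-δ) (t0+δ) := ⟨lt_of_le_of_lt hx.1 hτ.1, by linarith [hτ.2]⟩
          rw [(hφderiv τ hτoo).deriv, ← hψ0]
          exact hψmono (Ioo_subset_Icc_self hτoo) ht0N hτ.2.le
      exact hanti ⟨le_rfl, hcase⟩ ⟨hcase, le_rfl⟩ hcase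
  have : L t0 - 0 ≤ L x - c/2 * (x - t0)^2 := by simpa [hφdef] using hmain
  linarith

lemma haus_aux {a b c d m : ℝ} (hab : a ≤ b) (hcd : c ≤ d)
    (h1 : |a - c| ≤ m) (h2 : |b - d| ≤ m) :
    ∀ x ∈ Icc a b, ∃ y ∈ Icc c d, dist x y ≤ m := by
  intro x hx
  obtain ⟨h1a, h1b⟩ := abs_le.mp h1
  obtain ⟨h2a, h2b⟩ := abs_le.mp h2
  obtain ⟨hxa, hxb⟩ := hx
  refine ⟨max c (min x d), ⟨le_max_left _ _, max_le hcd (min_le_right _ _)⟩, ?_⟩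
  rw [Real.dist_eq, abs_le]
  rcases le_total x c with hxc | hxc
  · rw [min_eq_left (by linarith), max_eq_left (by linarith)]
    constructor <;> linarith
  · rcases le_total x d with hxd | hxd
    · rw [min_eq_left hxd, max_eq_right hxc]
      constructor <;> linarith
    · rw [min_eq_right hxd, max_eq_right hcd]
      constructor <;> linarith

lemma hausdorff_Icc_le {a b c d m : ℝ} (hab : a ≤ b) (hcd : c ≤ d)
    (h1 : |a - c| ≤ m) (h2 : |b - d| ≤ m) :
    Metric.hausdorffDist (Icc a b) (Icc c d) ≤ m := by
  have hm : 0 ≤ m := le_trans (abs_nonneg _) h1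
  have h1' : |c - a| ≤ m := by rw [abs_sub_comm]; exact h1
  have h2' : |d - b| ≤ m := by rw [abs_sub_comm]; exact h2
  exact Metric.hausdorffDist_le_of_mem_dist hm (haus_aux hab hcd h1 h2)
    (haus_aux hcd hab h1' h2')

end Aux

/-- Hausdorff-distance recovery of the oracle core. In the setting of the
local allocation-stability result for the population core-length curve
`L τ = q_{1-α+τ} - q_τ`, under Assumption (D), with endpoint densities bounded below by
`f_N > 0` on the neighborhood `N`, and estimated quantiles uniformly within `εq` at the
grid endpoint levels, the empirical core `B̂ = [q̂_{τ̂}, q̂_{1-α+τ̂}]` satisfies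
`d_H(B̂, B_{τ*}) ≤ εq + f_N⁻¹ √(2b/c)`. -/
theorem stmt11 (α ε M Δ r c δ κ b τstar fN εq : ℝ) (hα : α ∈ Ioo (0:ℝ) 1)
    (hε : ε ∈ Ioo (0:ℝ) (α / 2))
    (μ : Measure ℝ) [IsProbabilityMeasure μ] (f : ℝ → ℝ) (hD : AssumpD μ f)
    (L' L'' : ℝ → ℝ)
    (hLip : ∀ s ∈ Icc ε (α - ε), ∀ t ∈ Icc ε (α - ε),
      |(quant μ (1 - α + s) - quant μ s) - (quant μ (1 - α + t) - quant μ t)|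
        ≤ M * |s - t|)
    (hτs : τstar ∈ Ioo ε (α - ε))
    (hmin : ∀ τ ∈ Icc ε (α - ε),
      quant μ (1 - α + τstar) - quant μ τstar ≤ quant μ (1 - α + τ) - quant μ τ)
    (huniq : ∀ τ ∈ Icc ε (α - ε),
      quant μ (1 - α + τ) - quant μ τ = quant μ (1 - α + τstar) - quant μ τstar →
      τ = τstar)
    (hδ : 0 < δ) (hN : Icc (τstar - δ) (τstar + δ) ⊆ Icc ε (α - ε))
    (hd1 : ∀ τ ∈ Icc (τstar - δ) (τstar + δ),
      HasDerivWithinAt (fun σ => quant μ (1 - α + σ) - quant μ σ) (L' τ)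
        (Icc (τstar - δ) (τstar + δ)) τ)
    (hd2 : ∀ τ ∈ Icc (τstar - δ) (τstar + δ),
      HasDerivWithinAt L' (L'' τ) (Icc (τstar - δ) (τstar + δ)) τ)
    (hd2c : ContinuousOn L'' (Icc (τstar - δ) (τstar + δ)))
    (hc : 0 < c) (hcc : ∀ τ ∈ Icc (τstar - δ) (τstar + δ), c ≤ L'' τ)
    (hκ : 0 < κ)
    (hκle : ∀ τ ∈ Icc ε (α - ε) \ Icc (τstar - δ) (τstar + δ),
      κ ≤ (quant μ (1 - α + τ) - quant μ τ)
            - (quant μ (1 - α + τstar) - quant μ τstar))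
    (hfN : 0 < fN)
    (hfNle : ∀ τ ∈ Icc (τstar - δ) (τstar + δ),
      fN ≤ f (quant μ τ) ∧ fN ≤ f (quant μ (1 - α + τ)))
    (G : Finset ℝ) (hGne : G.Nonempty) (hGsub : ↑G ⊆ Icc ε (α - ε))
    (hmesh : ∀ τ ∈ Icc ε (α - ε), ∃ g ∈ G, |τ - g| ≤ Δ)
    (Lhat : ℝ → ℝ)
    (hr : ∀ g ∈ G, |Lhat g - (quant μ (1 - α + g) - quant μ g)| ≤ r)
    (hb : b = M * Δ + 2 * r) (hbκ : b < κ)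
    (qhat : ℝ → ℝ)
    (hq : ∀ g ∈ G, |qhat g - quant μ g| ≤ εq ∧
      |qhat (1 - α + g) - quant μ (1 - α + g)| ≤ εq)
    (τh : ℝ) (hτh : τh ∈ G ∧ ∀ g ∈ G, Lhat τh ≤ Lhat g) :
    Metric.hausdorffDist (Icc (qhat τh) (qhat (1 - α + τh)))
        (Icc (quant μ τstar) (quant μ (1 - α + τstar)))
      ≤ εq + fN⁻¹ * Real.sqrt (2 * b / c) := by
  obtain ⟨hα0, hα1⟩ := hα
  obtain ⟨hε0, hεα⟩ := hε
  have hεlt : ε < α - ε := by linarith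
  obtain ⟨hτG, hτmin⟩ := hτh
  set Lf : ℝ → ℝ := fun σ => quant μ (1 - α + σ) - quant μ σ with hLfdef
  have hLf : ∀ s : ℝ, Lf s = quant μ (1 - α + s) - quant μ s := fun s => rfl
  -- nonnegativity facts
  have hM0 : 0 ≤ M := by
    have h := hLip ε ⟨le_rfl, hεlt.le⟩ (α - ε) ⟨hεlt.le, le_rfl⟩
    have hpos : 0 < |ε - (α - ε)| := by rw [abs_pos]; intro h'; linarith
    nlinarith [abs_nonneg ((quant μ (1 - α + ε) - quant μ ε) -
      (quant μ (1 - α + (α - ε)) - quant μ (α - ε)))]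
  have hΔ0 : 0 ≤ Δ := by
    obtain ⟨g, hg, hgd⟩ := hmesh τstar ⟨hτs.1.le, hτs.2.le⟩
    exact le_trans (abs_nonneg _) hgd
  have hr0 : 0 ≤ r := le_trans (abs_nonneg _) (hr τh hτG)
  have hεq0 : 0 ≤ εq := le_trans (abs_nonneg _) (hq τh hτG).1
  -- near-optimality of τh
  obtain ⟨gs, hgsG, hgsd⟩ := hmesh τstar ⟨hτs.1.le, hτs.2.le⟩
  have hgsI : gs ∈ Icc ε (α - ε) := hGsub hgsG
  have hτhI : τh ∈ Icc ε (α - ε) := hGsub hτG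
  have hchain : Lf τh ≤ Lf τstar + b := by
    have hA := abs_le.mp (hr τh hτG)
    have hB := hτmin gs hgsG
    have hC := abs_le.mp (hr gs hgsG)
    have hD1 := abs_le.mp (hLip gs hgsI τstar ⟨hτs.1.le, hτs.2.le⟩)
    have hD2 : M * |gs - τstar| ≤ M * Δ := by
      have : |gs - τstar| ≤ Δ := by rwa [abs_sub_comm] at hgsd
      exact mul_le_mul_of_nonneg_left this hM0
    rw [hLf, hLf, hb]
    have habs := abs_le.mp (hLip gs hgsI τstar ⟨hτs.1.le, hτs.2.le⟩)
    linarith [habs.1, habs.2]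
  -- τh lies in the neighborhood N
  have hτhN : τh ∈ Icc (τstar - δ) (τstar + δ) := by
    by_contra hnot
    have hκ' := hκle τh ⟨hτhI, hnot⟩
    rw [← hLf, ← hLf] at hκ'
    linarith
  -- derivative zero at τstar
  have hτsN : τstar ∈ Icc (τstar - δ) (τstar + δ) := ⟨by linarith, by linarith⟩
  have hL'0 : L' τstar = 0 := by
    have hnhds : Icc (τstar - δ) (τstar + δ) ∈ nhds τstar :=
      Icc_mem_nhds (by linarith) (by linarith)
    have hda : HasDerivAt Lf (L' τstar) τstar := (hd1 τstar hτsN).hasDerivAt hnhds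
    have hloc : IsLocalMin Lf τstar := by
      have hmem : Icc ε (α - ε) ∈ nhds τstar := Icc_mem_nhds hτs.1 hτs.2
      filter_upwards [hmem] with τ hτ
      exact hmin τ hτ
    exact hloc.hasDerivAt_eq_zero hda
  -- quadratic growth
  have hquad : c / 2 * (τh - τstar) ^ 2 ≤ b := by
    have h2 : (quant μ (1 - α + τstar) - quant μ τstar) + c / 2 * (τh - τstar) ^ 2
        ≤ quant μ (1 - α + τh) - quant μ τh :=
      taylor_lb hδ hc hd1 hd2 hcc hL'0 hτhN
    have h3 : quant μ (1 - α + τh) - quant μ τh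
        ≤ (quant μ (1 - α + τstar) - quant μ τstar) + b := hchain
    linarith
  have hb0 : 0 ≤ b := le_trans (by positivity) hquad
  have habs : |τh - τstar| ≤ Real.sqrt (2 * b / c) := by
    have h1 : (τh - τstar) ^ 2 ≤ 2 * b / c := by
      rw [le_div_iff₀ hc]
      nlinarith
    calc |τh - τstar| = Real.sqrt ((τh - τstar) ^ 2) := (Real.sqrt_sq_eq_abs _).symm
      _ ≤ Real.sqrt (2 * b / c) := Real.sqrt_le_sqrt h1
  -- level bounds
  have hτh0 : 0 < τh := lt_of_lt_of_le hε0 hτhI.1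
  have hτh1 : τh < 1 := by linarith [hτhI.2]
  have hτs0 : 0 < τstar := by linarith [hτs.1]
  have hτs1 : τstar < 1 := by linarith [hτs.2]
  -- quantile Lipschitz bounds
  have hIccN : ∀ u : ℝ, min τh τstar ≤ u → u ≤ max τh τstar →
      u ∈ Icc (τstar - δ) (τstar + δ) := by
    intro u h1 h2
    constructor
    · calc τstar - δ ≤ min τh τstar := le_min (hτhN.1) (by linarith)
        _ ≤ u := h1
    · calc u ≤ max τh τstar := h2
        _ ≤ τstar + δ := max_le (hτhN.2) (by linarith)
  have hd1q : |quant μ τh - quant μ τstar| ≤ fN⁻¹ * |τh - τstar| := by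
    rcases le_total τh τstar with hc' | hc'
    · have := quant_lipschitz hD hτh0 hτs1 hc' hfN (fun t ht =>
        (hfNle t (hIccN t (le_trans (min_le_left _ _) ht.1)
          (le_trans ht.2 (le_max_right _ _)))).1)
      have hqm : quant μ τh ≤ quant μ τstar := quant_mono hτh0 hτs1 hc'
      rw [abs_of_nonpos (by linarith), abs_of_nonpos (by linarith)]
      linarith
    · have := quant_lipschitz hD hτs0 hτh1 hc' hfN (fun t ht =>
        (hfNle t (hIccN t (le_trans (min_le_right _ _) ht.1)
          (le_trans ht.2 (le_max_left _ _)))).1)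
      have hqm : quant μ τstar ≤ quant μ τh := quant_mono hτs0 hτh1 hc'
      rw [abs_of_nonneg (by linarith), abs_of_nonneg (by linarith)]
      linarith
  have hτh0' : 0 < 1 - α + τh := by linarith
  have hτh1' : 1 - α + τh < 1 := by linarith [hτhI.2]
  have hτs0' : 0 < 1 - α + τstar := by linarith
  have hτs1' : 1 - α + τstar < 1 := by linarith [hτs.2]
  have hd2q : |quant μ (1 - α + τh) - quant μ (1 - α + τstar)| ≤ fN⁻¹ * |τh - τstar| := by
    rcases le_total τh τstar with hc' | hc'
    · have hkey : ∀ t ∈ Icc (1 - α + τh) (1 - α + τstar), fN ≤ f (quant μ t) := by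
        intro t ht
        have hv : t - (1 - α) ∈ Icc (τstar - δ) (τstar + δ) :=
          hIccN _ (le_trans (min_le_left _ _) (by linarith [ht.1]))
            (le_trans (by linarith [ht.2]) (le_max_right _ _))
        have := (hfNle _ hv).2
        have he : 1 - α + (t - (1 - α)) = t := by ring
        rwa [he] at this
      have := quant_lipschitz hD hτh0' hτs1' (by linarith) hfN hkey
      have hqm : quant μ (1 - α + τh) ≤ quant μ (1 - α + τstar) :=
        quant_mono hτh0' hτs1' (by linarith)
      rw [abs_of_nonpos (by linarith), abs_of_nonpos (by linarith)]
      linarith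
    · have hkey : ∀ t ∈ Icc (1 - α + τstar) (1 - α + τh), fN ≤ f (quant μ t) := by
        intro t ht
        have hv : t - (1 - α) ∈ Icc (τstar - δ) (τstar + δ) :=
          hIccN _ (le_trans (min_le_right _ _) (by linarith [ht.1]))
            (le_trans (by linarith [ht.2]) (le_max_left _ _))
        have := (hfNle _ hv).2
        have he : 1 - α + (t - (1 - α)) = t := by ring
        rwa [he] at this
      have := quant_lipschitz hD hτs0' hτh1' (by linarith) hfN hkey
      have hqm : quant μ (1 - α + τstar) ≤ quant μ (1 - α + τh) :=
        quant_mono hτs0' hτh1' (by linarith)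
      rw [abs_of_nonneg (by linarith), abs_of_nonneg (by linarith)]
      linarith
  -- combine with estimation error
  have hfN' : (0:ℝ) ≤ fN⁻¹ := by positivity
  have hsq : fN⁻¹ * |τh - τstar| ≤ fN⁻¹ * Real.sqrt (2 * b / c) :=
    mul_le_mul_of_nonneg_left habs hfN'
  have he1 : |qhat τh - quant μ τstar| ≤ εq + fN⁻¹ * Real.sqrt (2 * b / c) := by
    have ht := abs_sub_le (qhat τh) (quant μ τh) (quant μ τstar)
    have := (hq τh hτG).1
    linarith
  have he2 : |qhat (1 - α + τh) - quant μ (1 - α + τstar)|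
      ≤ εq + fN⁻¹ * Real.sqrt (2 * b / c) := by
    have ht := abs_sub_le (qhat (1 - α + τh)) (quant μ (1 - α + τh)) (quant μ (1 - α + τstar))
    have := (hq τh hτG).2
    linarith
  have hqs : quant μ τstar ≤ quant μ (1 - α + τstar) :=
    quant_mono hτs0 hτs1' (by linarith)
  rcases le_total (qhat τh) (qhat (1 - α + τh)) with hcross | hcross
  · exact hausdorff_Icc_le hcross hqs he1 he2
  · rcases eq_or_lt_of_le hcross with heq | hlt
    · exact hausdorff_Icc_le (le_of_eq heq.symm) hqs he1 he2
    · rw [Icc_eq_empty (not_le.mpr hlt), Metric.hausdorffDist_empty']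
      positivity

end
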